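/- arXiv:1608.03115 — 3 statements merged into one kernel-verified Lean document; each statement's English description precedes it below -/
import Mathlib

section
/- If x̂ ∈ S is an efficient solution of (P) and both the extended Abadie data qualification (EADQ) and the Maeda objective qualification (MOQ) hold at x̂, then there exist ξ = (ξ_1, …, ξ_p) with ξ_i ∈ ∂f_i(x̂) for each i and λ in the unit simplex with λ_i > 0 for all i such that ϑ(x̂, ξ, λ) = 0. -/
open Set Filter Topology
open scoped RealInnerProductSpace Pointwise

noncomputable section

namespace MOSIP

variable {n : ℕ} {T : Type*} {p : ℕ}

/-- The decision space `ℝ^n`. -/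
abbrev Eucl (n : ℕ) := EuclideanSpace ℝ (Fin n)

/-- Subdifferential of a real-valued function. -/
def subdiff (h : Eucl n → ℝ) (x : Eucl n) : Set (Eucl n) :=
  {ξ | ∀ y, h x + ⟪ξ, y - x⟫ ≤ h y}

/-- Subdifferential of an extended-real-valued function. -/
def subdiffE (h : Eucl n → EReal) (x : Eucl n) : Set (Eucl n) :=
  {ξ | ∀ y, h x + ((⟪ξ, y - x⟫ : ℝ) : EReal) ≤ h y}

/-- Convexity of an extended-real-valued function. -/
def ConvexE (h : Eucl n → EReal) : Prop :=
  ∀ x y : Eucl n, ∀ a b : ℝ, 0 ≤ a → 0 ≤ b → a + b = 1 →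
    h (a • x + b • y) ≤ (a : EReal) * h x + (b : EReal) * h y

/-- Proper (with values in `ℝ ∪ {+∞}`): never `−∞` and not identically `+∞`. -/
def ProperE (h : Eucl n → EReal) : Prop :=
  (∀ x, h x ≠ ⊥) ∧ (∃ x, h x ≠ ⊤)

/-- Feasible set `S` of the problem `(P)`. -/
def feasSet (g : T → Eucl n → EReal) : Set (Eucl n) := {x | ∀ t, g t x ≤ 0}

/-- Active indices `T(x)`. -/
def activeIx (g : T → Eucl n → EReal) (x : Eucl n) : Set T := {t | g t x = 0}

/-- `ε`-active indices `T_ε(x)`. -/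
def activeIxEps (g : T → Eucl n → EReal) (x : Eucl n) (ε : ℝ) : Set T :=
  {t | ((-ε : ℝ) : EReal) ≤ g t x}

/-- `F(xh) = ⋃ i, ∂f_i(xh)`. -/
def FSet (f : Fin p → Eucl n → ℝ) (x : Eucl n) : Set (Eucl n) := ⋃ i, subdiff (f i) x

/-- `G(xh) = ⋃_{t ∈ T(xh)} ∂g_t(xh)`. -/
def GSet (g : T → Eucl n → EReal) (x : Eucl n) : Set (Eucl n) :=
  ⋃ t ∈ activeIx g x, subdiffE (g t) x

/-- The smallest convex cone containing `M` and `0`: all finite nonnegative combinations. -/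
def coneHull (M : Set (Eucl n)) : Set (Eucl n) :=
  {x | ∃ (s : Finset (Eucl n)) (c : Eucl n → ℝ), ↑s ⊆ M ∧ (∀ v ∈ s, 0 ≤ c v) ∧
    x = ∑ v ∈ s, c v • v}

/-- Negative polar cone `M⁰`. -/
def negPolar (M : Set (Eucl n)) : Set (Eucl n) := {d | ∀ ξ ∈ M, ⟪ξ, d⟫ ≤ 0}

/-- Strictly negative polar cone `M⁻`. -/
def strictNegPolar (M : Set (Eucl n)) : Set (Eucl n) := {d | ∀ ξ ∈ M, ⟪ξ, d⟫ < 0}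

/-- Contingent (Bouligand tangent) cone of `M` at `x`. -/
def contingentCone (M : Set (Eucl n)) (x : Eucl n) : Set (Eucl n) :=
  {v | ∃ (τ : ℕ → ℝ) (w : ℕ → Eucl n), (∀ r, 0 < τ r) ∧ Tendsto τ atTop (𝓝 0) ∧
    Tendsto w atTop (𝓝 v) ∧ ∀ r, x + τ r • w r ∈ M}

/-- Normal cone `N(M, x) := C(M, x)⁰`. -/
def normalCone (M : Set (Eucl n)) (x : Eucl n) : Set (Eucl n) :=
  negPolar (contingentCone M x)

/-- Weak efficient solution. -/
def WeakEff (f : Fin p → Eucl n → ℝ) (S : Set (Eucl n)) (xh : Eucl n) : Prop :=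
  ¬ ∃ x ∈ S, ∀ i, f i x < f i xh

/-- Efficient solution. -/
def Eff (f : Fin p → Eucl n → ℝ) (S : Set (Eucl n)) (xh : Eucl n) : Prop :=
  ¬ ∃ x ∈ S, (∀ i, f i x ≤ f i xh) ∧ ∃ j, f j x < f j xh

/-- Isolated efficient solution with constant `ν`:
`max_i (f_i(x) − f_i(xh)) ≥ ν‖x − xh‖` on `S`. -/
def IsolatedEff (f : Fin p → Eucl n → ℝ) (S : Set (Eucl n)) (xh : Eucl n) (ν : ℝ) : Prop :=
  ∀ x ∈ S, ∃ i, ν * ‖x - xh‖ ≤ f i x - f i xh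

/-- `w ∈ Σ α_i ∂f_i(xh) + Σ_{t ∈ T*} β_t ∂g_t(xh)` with multipliers as described,
where `Nonneg`/`Pos` refers to the sign condition on the `α_i`. -/
def KKTPoint (f : Fin p → Eucl n → ℝ) (g : T → Eucl n → EReal) (xh : Eucl n)
    (w : Eucl n) : Prop :=
  ∃ (α : Fin p → ℝ) (Ts : Finset T) (β : T → ℝ) (ξ : Fin p → Eucl n) (ζ : T → Eucl n),
    (∀ i, 0 ≤ α i) ∧ ∑ i, α i = 1 ∧ (∀ t ∈ Ts, t ∈ activeIx g xh) ∧
    (∀ t ∈ Ts, 0 ≤ β t) ∧ (∀ i, ξ i ∈ subdiff (f i) xh) ∧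
    (∀ t ∈ Ts, ζ t ∈ subdiffE (g t) xh) ∧
    ∑ i, α i • ξ i + ∑ t ∈ Ts, β t • ζ t = w

/-- The weak KKT condition at `xh`. -/
def WeakKKT (f : Fin p → Eucl n → ℝ) (g : T → Eucl n → EReal) (xh : Eucl n) : Prop :=
  KKTPoint f g xh 0

/-- The strong KKT condition at `xh` (all objective multipliers positive). -/
def StrongKKT (f : Fin p → Eucl n → ℝ) (g : T → Eucl n → EReal) (xh : Eucl n) : Prop :=
  ∃ (α : Fin p → ℝ) (Ts : Finset T) (β : T → ℝ) (ξ : Fin p → Eucl n) (ζ : T → Eucl n),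
    (∀ i, 0 < α i) ∧ ∑ i, α i = 1 ∧ (∀ t ∈ Ts, t ∈ activeIx g xh) ∧
    (∀ t ∈ Ts, 0 ≤ β t) ∧ (∀ i, ξ i ∈ subdiff (f i) xh) ∧
    (∀ t ∈ Ts, ζ t ∈ subdiffE (g t) xh) ∧
    ∑ i, α i • ξ i + ∑ t ∈ Ts, β t • ζ t = 0

/-- The perturbed KKT condition at `xh` with constant `ν`. -/
def PerturbedKKT (f : Fin p → Eucl n → ℝ) (g : T → Eucl n → EReal) (xh : Eucl n)
    (ν : ℝ) : Prop :=
  ∀ w : Eucl n, ‖w‖ ≤ ν → KKTPoint f g xh w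

/-- The gap function `ϑ(x, ξ, λ) = sup_{y ∈ S} Σ_i λ_i ⟪ξ_i, x − y⟫`. -/
def gapFn (S : Set (Eucl n)) (x : Eucl n) (ξ : Fin p → Eucl n) (lam : Fin p → ℝ) : EReal :=
  ⨆ y ∈ S, ((∑ i, lam i * ⟪ξ i, x - y⟫ : ℝ) : EReal)

/-- The unit simplex of multipliers. -/
def simplex (lam : Fin p → ℝ) : Prop := (∀ i, 0 ≤ lam i) ∧ ∑ i, lam i = 1

/-- Supremum (marginal) function `ψ(x) = sup_t g_t(x)`. -/
def supFn (g : T → Eucl n → EReal) (x : Eucl n) : EReal := ⨆ t, g t x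

/-- Directional derivative of a convex extended-real-valued function,
`h'(x; d) = inf_{τ > 0} (h(x + τ d) − h(x))/τ` (the limit as `τ ↓ 0`). -/
def dirDeriv (h : Eucl n → EReal) (x d : Eucl n) : EReal :=
  ⨅ τ ∈ Ioi (0 : ℝ), (h (x + τ • d) - h x) * ((τ⁻¹ : ℝ) : EReal)

/-- Every constraint is (real-valued and) continuously differentiable around `xh`,
with gradient `gr t` at `xh`. -/
def SmoothConstraintsAt (g : T → Eucl n → EReal) (gr : T → Eucl n) (xh : Eucl n) : Prop :=
  ∀ t, ∃ (h : Eucl n → ℝ) (U : Set (Eucl n)), U ∈ 𝓝 xh ∧ (∀ y ∈ U, g t y = (h y : EReal)) ∧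
    ContDiffOn ℝ 1 h U ∧ gradient h xh = gr t

/-- Slater CQ. -/
def SCQ (g : T → Eucl n → EReal) : Prop := ∃ x₀ : Eucl n, ∀ t, g t x₀ < 0

/-- Mangasarian–Fromovitz CQ at `xh`. -/
def MFCQ (g : T → Eucl n → EReal) (xh : Eucl n) : Prop :=
  (GSet g xh).Nonempty ∧ (strictNegPolar (GSet g xh)).Nonempty

/-- Perturbed Mangasarian–Fromovitz CQ at `xh`. -/
def PMFCQ (g : T → Eucl n → EReal) (xh : Eucl n) : Prop :=
  ∃ xs : Eucl n,
    (⨅ ε ∈ Ioi (0 : ℝ), ⨆ ξ ∈ ⋃ t ∈ activeIxEps g xh ε, subdiffE (g t) xh,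
      ((⟪ξ, xs⟫ : ℝ) : EReal)) < 0

/-- Local Farkas–Minkowski CQ at `xh`. -/
def LFMCQ (g : T → Eucl n → EReal) (xh : Eucl n) : Prop :=
  normalCone (feasSet g) xh = coneHull (GSet g xh)

/-- Closed cone CQ at `xh`. -/
def CCCQ (g : T → Eucl n → EReal) (xh : Eucl n) : Prop :=
  IsClosed (coneHull (GSet g xh))

/-- Abadie CQ at `xh`. -/
def ACQ (g : T → Eucl n → EReal) (xh : Eucl n) : Prop :=
  (GSet g xh).Nonempty ∧ negPolar (GSet g xh) ⊆ contingentCone (feasSet g) xh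

/-- Kuhn–Tucker CQ at `xh`. -/
def KTCQ (g : T → Eucl n → EReal) (xh : Eucl n) : Prop :=
  {d | dirDeriv (supFn g) xh d ≤ 0} ⊆ contingentCone (feasSet g) xh

/-- Pshenichnyi–Levin–Valadier CQ at `xh`. -/
def PLVCQ (g : T → Eucl n → EReal) (xh : Eucl n) : Prop :=
  subdiffE (supFn g) xh ⊆ coneHull (GSet g xh)

/-- Weak Abadie DQ at `xh`. -/
def WADQ (f : Fin p → Eucl n → ℝ) (g : T → Eucl n → EReal) (xh : Eucl n) : Prop :=
  (GSet g xh).Nonempty ∧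
    strictNegPolar (FSet f xh) ∩ negPolar (GSet g xh) ⊆ contingentCone (feasSet g) xh

/-- The sublevel sets `Q^i(xh)`. -/
def QSet (f : Fin p → Eucl n → ℝ) (S : Set (Eucl n)) (xh : Eucl n) (i : Fin p) :
    Set (Eucl n) :=
  {x ∈ S | ∀ l, l ≠ i → f l x ≤ f l xh}

/-- Extended Abadie DQ at `xh`. -/
def EADQ (f : Fin p → Eucl n → ℝ) (g : T → Eucl n → EReal) (xh : Eucl n) : Prop :=
  (GSet g xh).Nonempty ∧
    negPolar (FSet f xh) ∩ negPolar (GSet g xh) ⊆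
      ⋂ i, contingentCone (QSet f (feasSet g) xh i) xh

/-- Maeda objective qualification at `xh`. -/
def MOQ (f : Fin p → Eucl n → ℝ) (xh : Eucl n) : Prop :=
  negPolar (FSet f xh) ⊆ {0} ∪ ⋃ i, strictNegPolar (subdiff (f i) xh)

variable {n p : ℕ} {T : Type*}

/-!
Efficiency makes `x̂` a minimiser of `f i` over `Q^i(x̂)`, so `f i` does not decrease from `x̂`
along any direction of `C(Q^i(x̂), x̂)`. The one-sided directional derivative of a convex function
is attained as `⟪ξ, d⟫` for some subgradient `ξ` (Hahn–Banach), so by EADQ and MOQ no nonzero `d`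
lies in `F(x̂)⁰ ∩ G(x̂)⁰`. Hence the convex cone generated by the `∂f_i(x̂)` and the normal cone
`N` of `S` at `x̂` has trivial polar and is all of `ℝⁿ`. Writing `-∑ η_i` (with `η_i ∈ ∂f_i(x̂)`)
as an element of this cone gives `∑ s_i ξ_i ∈ -N` with `ξ_i ∈ ∂f_i(x̂)` and all `s_i ≥ 1`;
normalising `s` to `λ` yields `∑ λ_i ξ_i ∈ -N`, which says exactly that `ϑ(x̂, ξ, λ) = 0`.
-/

section Convex

variable {E : Type*}

lemma _root_.Convex.exists_smul_eq_add [AddCommGroup E] [Module ℝ E] {A : Set E} (hA : Convex ℝ A)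
    {a b : E} (ha : a ∈ A) (hb : b ∈ A) {s t : ℝ} (hs : 0 ≤ s) (ht : 0 ≤ t) :
    ∃ c ∈ A, (s + t) • c = s • a + t • b :=
  mem_smul_set.1 <| hA.add_smul hs ht ▸ add_mem_add (smul_mem_smul_set ha) (smul_mem_smul_set hb)

lemma _root_.Convex.eq_univ_of_dense [NormedAddCommGroup E] [NormedSpace ℝ E]
    [FiniteDimensional ℝ E] {C : Set E} (hC : Convex ℝ C) (hCd : Dense C) : C = univ := by
  have hspan : affineSpan ℝ C = ⊤ := by
    rw [← AffineSubspace.coe_eq_univ_iff, eq_univ_iff_forall]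
    exact fun y => closure_minimal (subset_affineSpan ℝ C)
      (affineSpan ℝ C).closed_of_finiteDimensional (hCd y)
  have hint := hC.interior_closure_eq_interior_of_nonempty_interior
    (hC.interior_nonempty_iff_affineSpan_eq_top.2 hspan)
  rw [hCd.closure_eq, interior_univ] at hint
  exact eq_univ_of_univ_subset (hint ▸ interior_subset)

end Convex

section DirectionalDerivative

variable {E : Type*} [AddCommGroup E] [Module ℝ E] {f : E → ℝ} {x v : E} {σ τ : ℝ}

def dirSlope (f : E → ℝ) (x v : E) (τ : ℝ) : ℝ := (f (x + τ • v) - f x) / τ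

/-- For convex `f` the slopes decrease as `τ ↓ 0`, so this infimum is the one-sided
directional derivative. -/
def convexDirDeriv (f : E → ℝ) (x v : E) : ℝ := sInf (dirSlope f x v '' Ioi 0)

lemma _root_.ConvexOn.comp_add_smul (hf : ConvexOn ℝ univ f) (x v : E) :
    ConvexOn ℝ univ fun τ : ℝ => f (x + τ • v) := by
  have hline : (fun τ : ℝ => f (x + τ • v)) = f ∘ AffineMap.lineMap x (x + v) := by
    ext τ
    simp [AffineMap.lineMap_apply, add_comm]
  rw [hline]
  exact hf.comp_affineMap _

lemma _root_.ConvexOn.dirSlope_mono (hf : ConvexOn ℝ univ f) (hσ : 0 < σ) (hστ : σ ≤ τ) :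
    dirSlope f x v σ ≤ dirSlope f x v τ := by
  simpa [dirSlope] using (hf.comp_add_smul x v).secant_mono (a := 0) trivial trivial trivial
    hσ.ne' (hσ.trans_le hστ).ne' hστ

lemma _root_.ConvexOn.sub_le_dirSlope (hf : ConvexOn ℝ univ f) (hτ : 0 < τ) :
    f x - f (x - v) ≤ dirSlope f x v τ := by
  have := (hf.comp_add_smul x v).secant_mono (a := 0) (x := -1) trivial trivial trivial
    (by norm_num) hτ.ne' (by linarith)
  simpa only [dirSlope, neg_one_smul, ← sub_eq_add_neg, zero_smul, add_zero, sub_zero, div_neg,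
    div_one, neg_sub] using this

lemma _root_.ConvexOn.convexDirDeriv_le_dirSlope (hf : ConvexOn ℝ univ f) (hτ : 0 < τ) :
    convexDirDeriv f x v ≤ dirSlope f x v τ :=
  csInf_le ⟨f x - f (x - v), by rintro _ ⟨σ, hσ, rfl⟩; exact hf.sub_le_dirSlope hσ⟩ ⟨τ, hτ, rfl⟩

lemma convexDirDeriv_nonneg_of_forall_le (h : ∀ τ : ℝ, 0 < τ → f x ≤ f (x + τ • v)) :
    0 ≤ convexDirDeriv f x v :=
  le_csInf ⟨_, 1, mem_Ioi.2 one_pos, rfl⟩ <| by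
    rintro _ ⟨τ, hτ, rfl⟩
    exact div_nonneg (sub_nonneg.2 (h τ hτ)) (le_of_lt hτ)

@[simp]
lemma convexDirDeriv_zero (f : E → ℝ) (x : E) : convexDirDeriv f x 0 = 0 := by
  have : dirSlope f x 0 = fun _ => 0 := by
    ext τ
    simp [dirSlope]
  rw [convexDirDeriv, this, nonempty_Ioi.image_const, csInf_singleton]

lemma convexDirDeriv_smul (f : E → ℝ) (x v : E) {c : ℝ} (hc : 0 < c) :
    convexDirDeriv f x (c • v) = c * convexDirDeriv f x v := by
  have hslope : dirSlope f x (c • v) = (c * ·) ∘ dirSlope f x v ∘ (c * ·) := by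
    ext τ
    simp only [dirSlope, Function.comp, smul_smul, mul_comm τ c]
    rw [mul_div_assoc', mul_div_mul_left _ _ hc.ne']
  rw [convexDirDeriv, convexDirDeriv, hslope, image_comp, image_comp, image_mul_left_Ioi hc,
    mul_zero, ← smul_eq_mul, ← Real.sInf_smul_of_nonneg hc.le]
  rfl

lemma _root_.ConvexOn.le_apply_add_smul_of_le (hf : ConvexOn ℝ univ f) (hσ : 0 < σ) (hστ : σ ≤ τ)
    (h : f x ≤ f (x + σ • v)) : f x ≤ f (x + τ • v) := by
  have := (div_nonneg (sub_nonneg.2 h) hσ.le).trans (hf.dirSlope_mono (x := x) (v := v) hσ hστ)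
  rwa [dirSlope, le_div_iff₀ (hσ.trans_le hστ), zero_mul, sub_nonneg] at this

lemma _root_.ConvexOn.dirSlope_add_le (hf : ConvexOn ℝ univ f) (u v : E) (hτ : 0 < τ) :
    dirSlope f x (u + v) (τ / 2) ≤ dirSlope f x u τ + dirSlope f x v τ := by
  have hmid : (1 / 2 : ℝ) • (x + τ • u) + (1 / 2 : ℝ) • (x + τ • v) = x + (τ / 2) • (u + v) := by
    module
  have hconv := hf.2 (mem_univ (x + τ • u)) (mem_univ (x + τ • v))
    (by norm_num : (0 : ℝ) ≤ 1 / 2) (by norm_num : (0 : ℝ) ≤ 1 / 2) (by norm_num)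
  rw [hmid, smul_eq_mul, smul_eq_mul] at hconv
  rw [dirSlope, dirSlope, dirSlope, ← add_div, div_le_div_iff₀ (half_pos hτ) hτ]
  nlinarith [mul_le_mul_of_nonneg_right hconv hτ.le]

lemma _root_.ConvexOn.convexDirDeriv_add_le (hf : ConvexOn ℝ univ f) (u v : E) :
    convexDirDeriv f x (u + v) ≤ convexDirDeriv f x u + convexDirDeriv f x v := by
  have hsplit : ∀ σ₁ ∈ Ioi (0 : ℝ), ∀ σ₂ ∈ Ioi (0 : ℝ),
      convexDirDeriv f x (u + v) ≤ dirSlope f x u σ₁ + dirSlope f x v σ₂ := by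
    intro σ₁ h₁ σ₂ h₂
    have hσ : 0 < min σ₁ σ₂ := lt_min h₁ h₂
    calc convexDirDeriv f x (u + v) ≤ dirSlope f x (u + v) (min σ₁ σ₂ / 2) :=
          hf.convexDirDeriv_le_dirSlope (half_pos hσ)
      _ ≤ dirSlope f x u (min σ₁ σ₂) + dirSlope f x v (min σ₁ σ₂) := hf.dirSlope_add_le u v hσ
      _ ≤ dirSlope f x u σ₁ + dirSlope f x v σ₂ :=
          add_le_add (hf.dirSlope_mono hσ (min_le_left _ _)) (hf.dirSlope_mono hσ (min_le_right _ _))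
  have hne : ∀ w, (dirSlope f x w '' Ioi 0).Nonempty := fun w => nonempty_Ioi.image _
  have hu : ∀ σ₂ ∈ Ioi (0 : ℝ),
      convexDirDeriv f x (u + v) - dirSlope f x v σ₂ ≤ convexDirDeriv f x u := fun σ₂ h₂ =>
    le_csInf (hne u) (forall_mem_image.2 fun σ₁ h₁ => sub_le_iff_le_add.2 (hsplit σ₁ h₁ σ₂ h₂))
  have hv : convexDirDeriv f x (u + v) - convexDirDeriv f x u ≤ convexDirDeriv f x v :=
    le_csInf (hne v) (forall_mem_image.2 fun σ₂ h₂ => by linarith [hu σ₂ h₂])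
  linarith

lemma _root_.ConvexOn.mul_convexDirDeriv_le (hf : ConvexOn ℝ univ f) (c : ℝ) (v : E) :
    c * convexDirDeriv f x v ≤ convexDirDeriv f x (c • v) := by
  rcases lt_trichotomy c 0 with hc | rfl | hc
  · have hsub := hf.convexDirDeriv_add_le (x := x) (c • v) ((-c) • v)
    rw [← add_smul, add_neg_cancel, zero_smul, convexDirDeriv_zero,
      convexDirDeriv_smul f x v (neg_pos.2 hc)] at hsub
    linarith
  · simp
  · exact (convexDirDeriv_smul f x v hc).ge

end DirectionalDerivative

section Subdifferential

variable {f : Eucl n → ℝ} {x d : Eucl n}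

lemma convex_subdiff (f : Eucl n → ℝ) (x : Eucl n) : Convex ℝ (subdiff f x) := by
  intro ξ hξ ζ hζ a b ha hb hab y
  have := add_le_add (mul_le_mul_of_nonneg_left (hξ y) ha) (mul_le_mul_of_nonneg_left (hζ y) hb)
  rw [inner_add_left, real_inner_smul_left, real_inner_smul_left]
  linear_combination this + (f y - f x) * hab

lemma _root_.ConvexOn.exists_mem_subdiff_inner_eq_convexDirDeriv (hf : ConvexOn ℝ univ f)
    (x d : Eucl n) : ∃ ξ ∈ subdiff f x, ⟪ξ, d⟫ = convexDirDeriv f x d := by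
  have hzero : ∀ c : ℝ, c • d = 0 → RingHom.id ℝ c • convexDirDeriv f x d = 0 := by
    intro c hc
    rcases smul_eq_zero.1 hc with rfl | rfl
    · exact zero_smul _ _
    · rw [convexDirDeriv_zero, smul_zero]
  set ℓ := LinearPMap.mkSpanSingleton' d (convexDirDeriv f x d) hzero
  have hℓ : ∀ z : ℓ.domain, ℓ z ≤ convexDirDeriv f x z := by
    rintro ⟨_, hz⟩
    obtain ⟨c, rfl⟩ := Submodule.mem_span_singleton.1 hz
    rw [LinearPMap.mkSpanSingleton'_apply, smul_eq_mul]
    exact hf.mul_convexDirDeriv_le c d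
  obtain ⟨g, hgℓ, hg⟩ := exists_extension_of_le_sublinear ℓ (convexDirDeriv f x)
    (fun c hc v => convexDirDeriv_smul f x v hc) hf.convexDirDeriv_add_le hℓ
  set ξ := (InnerProductSpace.toDual ℝ (Eucl n)).symm (LinearMap.toContinuousLinearMap g)
  have hξ : ∀ v, ⟪ξ, v⟫ = g v := fun v => InnerProductSpace.toDual_symm_apply
  refine ⟨ξ, fun y => ?_, ?_⟩
  · have := (hg (y - x)).trans (hf.convexDirDeriv_le_dirSlope one_pos)
    simp only [dirSlope, one_smul, add_sub_cancel, div_one] at this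
    linarith [hξ (y - x)]
  · rw [hξ, hgℓ ⟨d, Submodule.mem_span_singleton_self d⟩]
    exact LinearPMap.mkSpanSingleton'_apply_self _ _ _ _

lemma _root_.ConvexOn.subdiff_nonempty (hf : ConvexOn ℝ univ f) (x : Eucl n) :
    (subdiff f x).Nonempty :=
  let ⟨ξ, hξ, _⟩ := hf.exists_mem_subdiff_inner_eq_convexDirDeriv x 0
  ⟨ξ, hξ⟩

lemma _root_.ConvexOn.exists_mem_subdiff_inner_nonneg (hf : ConvexOn ℝ univ f)
    (h : ∀ τ : ℝ, 0 < τ → f x ≤ f (x + τ • d)) : ∃ ξ ∈ subdiff f x, 0 ≤ ⟪ξ, d⟫ :=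
  let ⟨ξ, hξ, hξd⟩ := hf.exists_mem_subdiff_inner_eq_convexDirDeriv x d
  ⟨ξ, hξ, hξd ▸ convexDirDeriv_nonneg_of_forall_le h⟩

lemma _root_.ConvexOn.le_apply_add_smul_of_mem_contingentCone (hf : ConvexOn ℝ univ f)
    {M : Set (Eucl n)} (hmin : ∀ y ∈ M, f x ≤ f y) (hd : d ∈ contingentCone M x) {τ : ℝ}
    (hτ : 0 < τ) : f x ≤ f (x + τ • d) := by
  obtain ⟨τs, ws, hτs, hτs0, hws, hmem⟩ := hd
  have hlim : Tendsto (fun r => f (x + τ • ws r)) atTop (𝓝 (f (x + τ • d))) :=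
    ((continuousOn_univ.1 (hf.continuousOn isOpen_univ)).tendsto _).comp
      (tendsto_const_nhds.add (hws.const_smul τ))
  refine ge_of_tendsto hlim ?_
  filter_upwards [hτs0.eventually_lt_const hτ] with r hr
  exact hf.le_apply_add_smul_of_le (hτs r) hr.le (hmin _ (hmem r))

end Subdifferential

section ConicSum

variable {E ι : Type*} [AddCommGroup E] [Module ℝ E] [Fintype ι] {A : ι → Set E} {N : Set E}

def conicSum (A : ι → Set E) (N : Set E) : Set E :=
  {x | ∃ (t : ι → ℝ) (b : ι → E) (ν : E), (∀ i, 0 ≤ t i) ∧ (∀ i, b i ∈ A i) ∧ ν ∈ N ∧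
    x = ∑ i, t i • b i + ν}

lemma convex_conicSum (hA : ∀ i, Convex ℝ (A i)) (hN : Convex ℝ N) :
    Convex ℝ (conicSum A N) := by
  rintro _ ⟨t, b, ν, ht, hb, hν, rfl⟩ _ ⟨t', b', ν', ht', hb', hν', rfl⟩ a a' ha ha' haa'
  choose c hc hceq using fun i =>
    (hA i).exists_smul_eq_add (hb i) (hb' i) (mul_nonneg ha (ht i)) (mul_nonneg ha' (ht' i))
  refine ⟨fun i => a * t i + a' * t' i, c, a • ν + a' • ν',
    fun i => add_nonneg (mul_nonneg ha (ht i)) (mul_nonneg ha' (ht' i)), hc,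
    hN hν hν' ha ha' haa', ?_⟩
  simp only [hceq, smul_add, Finset.smul_sum, smul_smul, Finset.sum_add_distrib]
  abel

lemma smul_mem_conicSum (hN : ∀ r : ℝ, 0 < r → ∀ ν ∈ N, r • ν ∈ N) {r : ℝ} (hr : 0 < r)
    {x : E} (hx : x ∈ conicSum A N) : r • x ∈ conicSum A N := by
  obtain ⟨t, b, ν, ht, hb, hν, rfl⟩ := hx
  exact ⟨fun i => r * t i, b, r • ν, fun i => mul_nonneg hr.le (ht i), hb, hN r hr ν hν,
    by simp only [smul_add, Finset.smul_sum, smul_smul]⟩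

lemma subset_conicSum_right (hA : ∀ i, (A i).Nonempty) : N ⊆ conicSum A N := by
  choose η hη using hA
  exact fun ν hν => ⟨0, η, ν, fun _ => le_rfl, hη, hν, by simp⟩

lemma mem_conicSum_of_mem (hA : ∀ i, (A i).Nonempty) (hN : 0 ∈ N) {j : ι} {b : E}
    (hb : b ∈ A j) : b ∈ conicSum A N := by
  classical
  choose η hη using hA
  refine ⟨Pi.single j 1, Function.update η j b, 0, fun i => ?_, fun i => ?_, hN, ?_⟩
  · by_cases h : i = j <;> simp [h]
  · by_cases h : i = j
    · subst h; simpa using hb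
    · simpa [h] using hη i
  · simp [Pi.single_apply, ite_smul]

lemma exists_pos_sum_eq_one_neg_sum_smul_mem [Nonempty ι] (hA : ∀ i, Convex ℝ (A i))
    (hN : ∀ r : ℝ, 0 < r → ∀ ν ∈ N, r • ν ∈ N) {η : ι → E} (hη : ∀ i, η i ∈ A i)
    (hmem : -∑ i, η i ∈ conicSum A N) :
    ∃ (ξ : ι → E) (lam : ι → ℝ), (∀ i, ξ i ∈ A i) ∧ (∀ i, 0 < lam i) ∧ ∑ i, lam i = 1 ∧
      -∑ i, lam i • ξ i ∈ N := by
  obtain ⟨t, b, ν, ht, hb, hν, heq⟩ := hmem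
  choose ξ hξ hξeq using fun i => (hA i).exists_smul_eq_add (hη i) (hb i) zero_le_one (ht i)
  have hs : ∀ i, 0 < 1 + t i := fun i => by linarith [ht i]
  have hsum : ∑ i, (1 + t i) • ξ i = -ν := by
    simp only [hξeq, one_smul, Finset.sum_add_distrib]
    linear_combination (norm := module) -heq
  set σ := ∑ i, (1 + t i)
  have hσ : 0 < σ := Finset.sum_pos (fun i _ => hs i) Finset.univ_nonempty
  refine ⟨ξ, fun i => (1 + t i) / σ, hξ, fun i => div_pos (hs i) hσ,
    by rw [← Finset.sum_div, div_self hσ.ne'], ?_⟩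
  have hscale : -∑ i, ((1 + t i) / σ) • ξ i = σ⁻¹ • ν := by
    simp only [div_eq_inv_mul, mul_smul, ← Finset.smul_sum, hsum, smul_neg, neg_neg]
  exact hscale ▸ hN _ (inv_pos.2 hσ) ν hν

end ConicSum

section NormalCone

variable {S : Set (Eucl n)} {x v : Eucl n}

/-- The normal cone of convex analysis, which for convex `S` agrees with `normalCone S x`. -/
def convexNormalCone (S : Set (Eucl n)) (x : Eucl n) : Set (Eucl n) :=
  {v | ∀ y ∈ S, ⟪v, y - x⟫ ≤ 0}

lemma zero_mem_convexNormalCone : (0 : Eucl n) ∈ convexNormalCone S x :=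
  fun y _ => by rw [inner_zero_left]

lemma smul_mem_convexNormalCone {r : ℝ} (hr : 0 ≤ r) (hv : v ∈ convexNormalCone S x) :
    r • v ∈ convexNormalCone S x :=
  fun y hy => by rw [real_inner_smul_left]; exact mul_nonpos_of_nonneg_of_nonpos hr (hv y hy)

lemma convex_convexNormalCone : Convex ℝ (convexNormalCone S x) :=
  fun v hv w hw a b ha hb _ y hy => by
    rw [inner_add_left]
    exact add_nonpos (smul_mem_convexNormalCone ha hv y hy) (smul_mem_convexNormalCone hb hw y hy)

lemma GSet_subset_convexNormalCone (g : T → Eucl n → EReal) (x : Eucl n) :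
    GSet g x ⊆ convexNormalCone (feasSet g) x := by
  intro ζ hζ y hy
  obtain ⟨t, ht, hζ⟩ := mem_iUnion₂.1 hζ
  have := (hζ y).trans (hy t)
  rwa [show g t x = 0 from ht, zero_add, ← EReal.coe_zero, EReal.coe_le_coe_iff] at this

lemma gapFn_eq_zero_of_neg_mem_convexNormalCone {ξ : Fin p → Eucl n} {lam : Fin p → ℝ}
    (hx : x ∈ S) (h : -∑ i, lam i • ξ i ∈ convexNormalCone S x) : gapFn S x ξ lam = 0 := by
  have hval : ∀ y, ∑ i, lam i * ⟪ξ i, x - y⟫ = ⟪-∑ i, lam i • ξ i, y - x⟫ := fun y => by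
    simp only [← neg_sub y x, inner_neg_right, inner_neg_left, sum_inner, real_inner_smul_left,
      mul_neg, Finset.sum_neg_distrib]
  refine le_antisymm (iSup₂_le fun y hy => ?_) ?_
  · rw [hval, ← EReal.coe_zero, EReal.coe_le_coe_iff]
    exact h y hy
  · refine le_trans ?_ (le_iSup₂ (f := fun y (_ : y ∈ S) =>
      ((∑ i, lam i * ⟪ξ i, x - y⟫ : ℝ) : EReal)) x hx)
    simp

end NormalCone

lemma negPolar_anti {M M' : Set (Eucl n)} (h : M ⊆ M') : negPolar M' ⊆ negPolar M :=
  fun _ hd ξ hξ => hd ξ (h hξ)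

lemma dense_of_negPolar_subset_zero {C : Set (Eucl n)} (hC : Convex ℝ C)
    (hcone : ∀ r : ℝ, 0 < r → ∀ x ∈ C, r • x ∈ C) (h0 : 0 ∈ C) (hpolar : negPolar C ⊆ {0}) :
    Dense C := by
  refine dense_iff_closure_eq.2 (eq_univ_of_forall fun z => by_contra fun hz => ?_)
  obtain ⟨ℓ, u, hlt, hu⟩ := geometric_hahn_banach_closed_point hC.closure isClosed_closure hz
  have hu0 : 0 < u := by simpa using hlt 0 (subset_closure h0)
  have hle : ∀ x ∈ C, ℓ x ≤ 0 := by
    intro x hx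
    by_contra! hpos
    have := hlt _ (subset_closure (hcone ((u + 1) / ℓ x) (div_pos (by linarith) hpos) x hx))
    rw [map_smul, smul_eq_mul, div_mul_cancel₀ _ hpos.ne'] at this
    linarith
  set d := (InnerProductSpace.toDual ℝ (Eucl n)).symm ℓ
  have hd : ∀ v, ⟪d, v⟫ = ℓ v := fun v => InnerProductSpace.toDual_symm_apply
  have hd0 : d = 0 := hpolar fun ξ hξ => by rw [real_inner_comm, hd]; exact hle ξ hξ
  have : ℓ z = 0 := by rw [← hd, hd0, inner_zero_left]
  linarith

lemma Eff.le_of_mem_QSet {f : Fin p → Eucl n → ℝ} {S : Set (Eucl n)} {xh x : Eucl n} {i : Fin p}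
    (heff : Eff f S xh) (hx : x ∈ QSet f S xh i) : f i xh ≤ f i x := by
  refine not_lt.1 fun hlt => heff ⟨x, hx.1, fun l => ?_, i, hlt⟩
  by_cases hl : l = i
  · exact hl ▸ hlt.le
  · exact hx.2 l hl

theorem negPolar_FSet_inter_negPolar_GSet_subset_zero {f : Fin p → Eucl n → ℝ}
    {g : T → Eucl n → EReal} {xh : Eucl n} (hf : ∀ i, ConvexOn ℝ univ (f i))
    (heff : Eff f (feasSet g) xh) (headq : EADQ f g xh) (hmoq : MOQ f xh) :
    negPolar (FSet f xh) ∩ negPolar (GSet g xh) ⊆ {0} := by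
  intro d hd
  rcases hmoq hd.1 with hzero | hdesc
  · exact hzero
  obtain ⟨i, hi⟩ := mem_iUnion.1 hdesc
  obtain ⟨ξ, hξ, hξd⟩ := (hf i).exists_mem_subdiff_inner_nonneg fun τ hτ =>
    (hf i).le_apply_add_smul_of_mem_contingentCone (fun _ hy => heff.le_of_mem_QSet hy)
      (mem_iInter.1 (headq.2 hd) i) hτ
  exact absurd (hi ξ hξ) hξd.not_gt

theorem stmt10_general
    (hp : 1 ≤ p)
    (f : Fin p → Eucl n → ℝ) (g : T → Eucl n → EReal)
    (hf : ∀ i, ConvexOn ℝ Set.univ (f i))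
    (xh : Eucl n) (hxS : xh ∈ feasSet g)
    (heff : Eff f (feasSet g) xh)
    (headq : EADQ f g xh) (hmoq : MOQ f xh) :
    ∃ (ξ : Fin p → Eucl n) (lam : Fin p → ℝ),
      (∀ i, ξ i ∈ subdiff (f i) xh) ∧ simplex lam ∧ (∀ i, 0 < lam i) ∧
      gapFn (feasSet g) xh ξ lam = 0 := by
  have : Nonempty (Fin p) := ⟨⟨0, hp⟩⟩
  set A := fun i => subdiff (f i) xh
  set N := convexNormalCone (feasSet g) xh
  have hA : ∀ i, Convex ℝ (A i) := fun i => convex_subdiff (f i) xh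
  have hAne : ∀ i, (A i).Nonempty := fun i => (hf i).subdiff_nonempty xh
  have hNcone : ∀ r : ℝ, 0 < r → ∀ ν ∈ N, r • ν ∈ N := fun _ hr _ => smul_mem_convexNormalCone hr.le
  have hNsub : N ⊆ conicSum A N := subset_conicSum_right hAne
  have hFsub : FSet f xh ⊆ conicSum A N :=
    iUnion_subset fun _ _ hb => mem_conicSum_of_mem hAne zero_mem_convexNormalCone hb
  have hGsub : GSet g xh ⊆ conicSum A N := (GSet_subset_convexNormalCone g xh).trans hNsub
  have hD : conicSum A N = univ :=
    (convex_conicSum hA convex_convexNormalCone).eq_univ_of_dense <|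
      dense_of_negPolar_subset_zero (convex_conicSum hA convex_convexNormalCone)
        (fun _ hr _ => smul_mem_conicSum hNcone hr) (hNsub zero_mem_convexNormalCone)
        fun d hd => negPolar_FSet_inter_negPolar_GSet_subset_zero hf heff headq hmoq
          ⟨negPolar_anti hFsub hd, negPolar_anti hGsub hd⟩
  choose η hη using hAne
  obtain ⟨ξ, lam, hξ, hpos, hsum, hN⟩ :=
    exists_pos_sum_eq_one_neg_sum_smul_mem hA hNcone hη (hD ▸ mem_univ (-∑ i, η i))
  exact ⟨ξ, lam, hξ, ⟨fun i => (hpos i).le, hsum⟩, hpos,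
    gapFn_eq_zero_of_neg_mem_convexNormalCone hxS hN⟩

/-- If `x̂ ∈ S` is an efficient solution of `(P)` and both EADQ and MOQ hold
at `x̂`, then there exist `ξ` with `ξ_i ∈ ∂f_i(x̂)` and `λ` in the unit simplex with all
`λ_i > 0` such that `ϑ(x̂, ξ, λ) = 0`. -/
theorem stmt10
    (hn : 1 ≤ n) (hp : 1 ≤ p)
    (f : Fin p → Eucl n → ℝ) (g : T → Eucl n → EReal)
    (hf : ∀ i, ConvexOn ℝ Set.univ (f i))
    (hgconv : ∀ t, ConvexE (g t))
    (hgproper : ∀ t, ProperE (g t))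
    (hglsc : ∀ t, LowerSemicontinuous (g t))
    (xh : Eucl n) (hxS : xh ∈ feasSet g)
    (heff : Eff f (feasSet g) xh)
    (headq : EADQ f g xh) (hmoq : MOQ f xh) :
    ∃ (ξ : Fin p → Eucl n) (lam : Fin p → ℝ),
      (∀ i, ξ i ∈ subdiff (f i) xh) ∧ simplex lam ∧ (∀ i, 0 < lam i) ∧
      gapFn (feasSet g) xh ξ lam = 0 :=
  stmt10_general hp f g hf xh hxS heff headq hmoq

end MOSIP
end
end

section
/- If the perturbed KKT condition holds at x̂ ∈ S with constant ν > 0, then x̂ is an isolated efficient solution of (P) with constant ν. -/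
open Set Filter Topology
open scoped RealInnerProductSpace Pointwise

noncomputable section

namespace MOSIP

variable {n : ℕ} {T : Type*} {p : ℕ}

variable {n p : ℕ} {T : Type*}

/-! Pairing the multiplier representation of `w = ν ‖x - x̂‖⁻¹ (x - x̂)` with `x - x̂` gives
`ν ‖x - x̂‖ ≤ Σ α_i ⟪ξ_i, x - x̂⟫ + Σ β_t ⟪ζ_t, x - x̂⟫`. The subgradient inequalities bound the
first sum by `Σ α_i (f_i x - f_i x̂)`; the second is `≤ 0` since `g_t x̂ = 0 ≥ g_t x` for active `t`;
and a convex combination is at most its largest term. -/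

theorem exists_sum_mul_le_of_sum_eq_one {ι : Type*} [Fintype ι] {α : ι → ℝ}
    (hα : ∀ i, 0 ≤ α i) (hsum : ∑ i, α i = 1) (a : ι → ℝ) : ∃ i, ∑ j, α j * a j ≤ a i := by
  have hne : (Finset.univ : Finset ι).Nonempty :=
    Finset.nonempty_of_sum_ne_zero (hsum.symm ▸ one_ne_zero)
  obtain ⟨i, -, hi⟩ := Finset.exists_max_image Finset.univ a hne
  refine ⟨i, ?_⟩
  calc ∑ j, α j * a j ≤ ∑ j, α j * a i :=
        Finset.sum_le_sum fun j _ => mul_le_mul_of_nonneg_left (hi j (Finset.mem_univ j)) (hα j)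
    _ = a i := by rw [← Finset.sum_mul, hsum, one_mul]

theorem exists_norm_le_inner_eq {E : Type*} [NormedAddCommGroup E] [InnerProductSpace ℝ E]
    {ν : ℝ} (hν : 0 ≤ ν) (d : E) : ∃ w : E, ‖w‖ ≤ ν ∧ ⟪w, d⟫ = ν * ‖d‖ := by
  rcases eq_or_ne d 0 with rfl | hd
  · exact ⟨0, by simpa using hν, by simp⟩
  · refine ⟨(ν / ‖d‖) • d, ?_, ?_⟩
    · rw [norm_smul, Real.norm_eq_abs, abs_div, abs_norm, abs_of_nonneg hν,
        div_mul_cancel₀ _ (norm_ne_zero_iff.mpr hd)]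
    · rw [real_inner_smul_left, real_inner_self_eq_norm_sq]
      field_simp

theorem inner_sub_le_of_mem_subdiff {h : Eucl n → ℝ} {x ξ : Eucl n} (hξ : ξ ∈ subdiff h x)
    (y : Eucl n) : ⟪ξ, y - x⟫ ≤ h y - h x := by
  linarith [hξ y]

theorem inner_sub_nonpos_of_mem_subdiffE {h : Eucl n → EReal} {x y ζ : Eucl n}
    (hζ : ζ ∈ subdiffE h x) (hx : h x = 0) (hy : h y ≤ 0) : ⟪ζ, y - x⟫ ≤ 0 := by
  have := (hζ y).trans hy
  rw [hx, zero_add] at this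
  exact_mod_cast this

theorem KKTPoint.exists_inner_le {f : Fin p → Eucl n → ℝ} {g : T → Eucl n → EReal}
    {xh w : Eucl n} (hw : KKTPoint f g xh w) {x : Eucl n} (hx : x ∈ feasSet g) :
    ∃ α, simplex α ∧ ⟪w, x - xh⟫ ≤ ∑ i, α i * (f i x - f i xh) := by
  obtain ⟨α, Ts, β, ξ, ζ, hα, hαsum, hTs, hβ, hξ, hζ, rfl⟩ := hw
  have hobj : ∑ i, α i * ⟪ξ i, x - xh⟫ ≤ ∑ i, α i * (f i x - f i xh) :=
    Finset.sum_le_sum fun i _ =>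
      mul_le_mul_of_nonneg_left (inner_sub_le_of_mem_subdiff (hξ i) x) (hα i)
  have hcon : ∑ t ∈ Ts, β t * ⟪ζ t, x - xh⟫ ≤ 0 :=
    Finset.sum_nonpos fun t ht => mul_nonpos_of_nonneg_of_nonpos (hβ t ht)
      (inner_sub_nonpos_of_mem_subdiffE (hζ t ht) (hTs t ht) (hx t))
  refine ⟨α, ⟨hα, hαsum⟩, ?_⟩
  simp only [inner_add_left, sum_inner, real_inner_smul_left]
  linarith

theorem stmt13_general
    (f : Fin p → Eucl n → ℝ) (g : T → Eucl n → EReal)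
    (xh : Eucl n)
    (ν : ℝ) (hν : 0 < ν)
    (hpkkt : PerturbedKKT f g xh ν) :
    IsolatedEff f (feasSet g) xh ν := by
  intro x hx
  obtain ⟨w, hwν, hwd⟩ := exists_norm_le_inner_eq hν.le (x - xh)
  obtain ⟨α, hα, hle⟩ := (hpkkt w hwν).exists_inner_le hx
  obtain ⟨i, hi⟩ := exists_sum_mul_le_of_sum_eq_one hα.1 hα.2 fun i => f i x - f i xh
  exact ⟨i, hwd ▸ hle.trans hi⟩

/-- If the perturbed KKT condition holds at `x̂ ∈ S` with constant `ν > 0`,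
then `x̂` is an isolated efficient solution of `(P)` with constant `ν`. -/
theorem stmt13
    (hn : 1 ≤ n) (hp : 1 ≤ p)
    (f : Fin p → Eucl n → ℝ) (g : T → Eucl n → EReal)
    (hf : ∀ i, ConvexOn ℝ Set.univ (f i))
    (hgconv : ∀ t, ConvexE (g t))
    (hgproper : ∀ t, ProperE (g t))
    (hglsc : ∀ t, LowerSemicontinuous (g t))
    (xh : Eucl n) (hxS : xh ∈ feasSet g)
    (ν : ℝ) (hν : 0 < ν)
    (hpkkt : PerturbedKKT f g xh ν) :
    IsolatedEff f (feasSet g) xh ν :=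
  stmt13_general f g xh ν hν hpkkt

end MOSIP
end
end

section
/- If x̂ ∈ S satisfies G(x̂) ≠ ∅ and the perturbed Mangasarian–Fromovitz constraint qualification (PMFCQ) holds at x̂, then the Mangasarian–Fromovitz constraint qualification (MFCQ) holds at x̂. -/
open Set Filter Topology
open scoped RealInnerProductSpace Pointwise

noncomputable section

namespace MOSIP

variable {n : ℕ} {T : Type*} {p : ℕ}

variable {n p : ℕ} {T : Type*}

lemma activeIx_subset_activeIxEps (g : T → Eucl n → EReal) (x : Eucl n) {ε : ℝ}
    (hε : 0 ≤ ε) : activeIx g x ⊆ activeIxEps g x ε := by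
  intro t (ht : g t x = 0)
  change ((-ε : ℝ) : EReal) ≤ g t x
  rw [ht]
  exact_mod_cast neg_nonpos.mpr hε

lemma GSet_subset_biUnion_activeIxEps (g : T → Eucl n → EReal) (x : Eucl n) {ε : ℝ}
    (hε : 0 ≤ ε) : GSet g x ⊆ ⋃ t ∈ activeIxEps g x ε, subdiffE (g t) x :=
  biUnion_subset_biUnion_left (activeIx_subset_activeIxEps g x hε)

lemma strictNegPolar_anti {M N : Set (Eucl n)} (h : M ⊆ N) :
    strictNegPolar N ⊆ strictNegPolar M :=
  fun _ hd ξ hξ => hd ξ (h hξ)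

lemma mem_strictNegPolar_of_biSup_lt_zero {M : Set (Eucl n)} {d : Eucl n}
    (h : (⨆ ξ ∈ M, ((⟪ξ, d⟫ : ℝ) : EReal)) < 0) : d ∈ strictNegPolar M := by
  intro ξ hξ
  have : ((⟪ξ, d⟫ : ℝ) : EReal) < 0 :=
    (le_biSup (fun ζ => ((⟪ζ, d⟫ : ℝ) : EReal)) hξ).trans_lt h
  exact_mod_cast this

theorem stmt17_general
    (g : T → Eucl n → EReal)
    (xh : Eucl n)
    (hG : (GSet g xh).Nonempty) (hpmfcq : PMFCQ g xh) :
    MFCQ g xh := by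
  obtain ⟨xs, hxs⟩ := hpmfcq
  obtain ⟨ε, hε_sup⟩ := iInf_lt_iff.mp hxs
  obtain ⟨hε, hsup⟩ := iInf_lt_iff.mp hε_sup
  exact ⟨hG, xs, strictNegPolar_anti (GSet_subset_biUnion_activeIxEps g xh hε.le)
    (mem_strictNegPolar_of_biSup_lt_zero hsup)⟩

/-- If `x̂ ∈ S` satisfies `G(x̂) ≠ ∅` and PMFCQ holds at `x̂`, then MFCQ
holds at `x̂`. -/
theorem stmt17
    (hn : 1 ≤ n) (hp : 1 ≤ p)
    (f : Fin p → Eucl n → ℝ) (g : T → Eucl n → EReal)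
    (hf : ∀ i, ConvexOn ℝ Set.univ (f i))
    (hgconv : ∀ t, ConvexE (g t))
    (hgproper : ∀ t, ProperE (g t))
    (hglsc : ∀ t, LowerSemicontinuous (g t))
    (xh : Eucl n) (hxS : xh ∈ feasSet g)
    (hG : (GSet g xh).Nonempty) (hpmfcq : PMFCQ g xh) :
    MFCQ g xh :=
  stmt17_general g xh hG hpmfcq

end MOSIP
end
end
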